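/- Let p : ℕ → ℕ and let J ⊆ S = K[x_0,…,x_n] be a strongly stable monomial ideal generated by s monomials of degree r such that dim_K (S/J)_t = p(t) for all t ≥ r. For a homogeneous ideal I ⊆ S generated by its degree-r homogeneous component, the following are equivalent: (i) I_r is a vector-space complement of ⟨N(J)_r⟩ in S_r and dim_K (S/I)_t = p(t) for all t ≥ r; (ii) I is generated by a J-marked set G which is moreover a J-marked basis, i.e., the residue classes of the monomials of N(J) form a K-vector-space basis of S/I. -/

import Mathlib

/-!
Write each generator `x^α` of `J` modulo `I_r` as `x^α - T α ∈ I_r` with `T α ∈ ⟨N(J)_r⟩`; this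
marked set generates `I` because `I_r ∩ ⟨N(J)_r⟩ = 0`. Strong stability lets the marked set reduce
every monomial to a combination of monomials outside `J`: divide `x^β` by the generator `x^α ∣ x^β`
of largest weight `w α = ∑ i, i * α i`; each term `x^(β - α) x^γ` of `x^(β - α) T α` that is still
in `J` has a generator divisor heavier than `x^γ`, so `w - max w(generator divisor)` drops.
Hence `S = I + ⟨N(J)⟩`, so `S_t = I_t + ⟨N(J)_t⟩` in every degree as `I` is homogeneous; for
`t ≥ r` the count `dim I_t + p t = dim S_t = dim J_t + p t` makes the sum direct, and `I_t = 0`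
below `r`. Since `I` is homogeneous, `S = I ⊕ ⟨N(J)⟩` says exactly that the classes of `N(J)` form
a basis of `S/I`, and the converse is read off degreewise.
-/

open MvPolynomial

theorem Submodule.disjoint_iff_finrank_add_eq {K V : Type*} [DivisionRing K] [AddCommGroup V]
    [Module K V] {A B : Submodule K V} [FiniteDimensional K A] [FiniteDimensional K B] :
    Disjoint A B ↔ Module.finrank K A + Module.finrank K B = Module.finrank K ↥(A ⊔ B) := by
  rw [← Submodule.finrank_sup_add_finrank_inf_eq, disjoint_iff, add_eq_left,
    Submodule.finrank_eq_zero]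

namespace Finsupp

variable {σ : Type*}

theorem eq_of_le_of_degree_eq {a b : σ →₀ ℕ} (h : a ≤ b) (hd : a.degree = b.degree) : a = b := by
  obtain ⟨c, rfl⟩ := le_iff_exists_add.mp h
  rw [map_add, left_eq_add, degree_eq_zero_iff] at hd
  rw [hd, add_zero]

theorem mem_of_mem_upperClosure_of_degree_eq {B : Set (σ →₀ ℕ)} {r : ℕ}
    (hB : ∀ α ∈ B, α.degree = r) {γ : σ →₀ ℕ} (hγ : γ ∈ upperClosure B) (hγr : γ.degree = r) :
    γ ∈ B := by
  obtain ⟨α, hα, hαγ⟩ := hγ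
  rwa [← eq_of_le_of_degree_eq hαγ ((hB α hα).trans hγr.symm)]

theorem weight_sub_single_add_single (w : σ → ℕ) {f : σ →₀ ℕ} {i : σ} (hi : f i ≠ 0) (j : σ) :
    weight w (f - single i 1 + single j 1) + w i = weight w f + w j := by
  rw [map_add, weight_single, one_smul, add_right_comm, weight_sub_single_add hi]

theorem degree_sub_single_add_single {f : σ →₀ ℕ} {i : σ} (hi : f i ≠ 0) (j : σ) :
    (f - single i 1 + single j 1).degree = f.degree := by
  have := weight_sub_single_add_single (fun _ => 1) hi j
  rw [degree_eq_weight_one]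
  omega

theorem sup_weight_le_weight (w : σ → ℕ) (B : Finset (σ →₀ ℕ)) (β : σ →₀ ℕ)
    [DecidablePred (· ≤ β)] : (B.filter (· ≤ β)).sup (weight w) ≤ weight w β :=
  Finset.sup_le fun α hα => by
    obtain ⟨c, rfl⟩ := le_iff_exists_add.mp (Finset.mem_filter.mp hα).2
    rw [map_add]
    exact Nat.le_add_right _ _

variable {m : ℕ}

theorem exists_lt_lt_of_weight_le {α γ : Fin m →₀ ℕ} (hdeg : α.degree = γ.degree) (hne : α ≠ γ)
    (hw : weight Fin.val α ≤ weight Fin.val γ) : ∃ i j, i < j ∧ γ i < α i ∧ α j < γ j := by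
  classical
  by_contra! hpair
  obtain ⟨b, hb, hbmax⟩ : ∃ b, α b < γ b ∧ ∀ j, α j < γ j → j ≤ b := by
    have hD : (Finset.univ.filter fun j => α j < γ j).Nonempty := by
      by_contra! hD
      refine hne (eq_of_le_of_degree_eq (fun j => ?_) hdeg.symm).symm
      simpa using Finset.filter_eq_empty_iff.mp hD (Finset.mem_univ j)
    obtain ⟨b, hb, hbmax⟩ := Finset.exists_max_image _ id hD
    exact ⟨b, (Finset.mem_filter.mp hb).2, fun j hj => hbmax j (by simpa using hj)⟩
  -- Without such a pair, the surplus of `α` over `γ` sits at indices `> b` and the deficit at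
  -- indices `≤ b`, so every term of `∑ (i - (b + 1)) (α i - γ i) = w α - w γ` is `≥ 0`.
  let term (i : Fin m) : ℤ := ((i : ℤ) - (b + 1)) * ((α i : ℤ) - γ i)
  have hterm : ∀ i, 0 ≤ term i := by
    intro i
    rcases lt_trichotomy (α i) (γ i) with h | h | h
    · have : (i : ℕ) ≤ b := hbmax i h
      exact mul_nonneg_of_nonpos_of_nonpos (by omega) (by omega)
    · simp [term, h]
    · have : (b : ℕ) < i := lt_of_not_ge fun hib =>
        (hpair i b (lt_of_le_of_ne hib fun e => by rw [e] at h; omega) h).not_gt hb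
      exact mul_nonneg (by omega) (by omega)
  have hb_pos : 0 < term b := by simp only [term]; nlinarith
  have hsum : ∑ i, term i = (weight Fin.val α : ℤ) - weight Fin.val γ
      - (b + 1) * ((α.degree : ℤ) - γ.degree) := by
    simp only [term, weight_eq_sum, degree_eq_sum, smul_eq_mul]
    push_cast
    simp only [mul_sub, Finset.mul_sum, ← Finset.sum_sub_distrib]
    exact Finset.sum_congr rfl fun i _ => by ring
  have := hb_pos.trans_le (Finset.single_le_sum (fun i _ => hterm i) (Finset.mem_univ b))
  rw [hsum, hdeg, sub_self, mul_zero, sub_zero] at this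
  omega

def IsStronglyStable (U : Set (Fin m →₀ ℕ)) : Prop :=
  ∀ β ∈ U, ∀ i j, i < j → β i ≠ 0 → β - single i 1 + single j 1 ∈ U

theorem IsStronglyStable.weight_lt_sup_weight {B : Finset (Fin m →₀ ℕ)} {r : ℕ}
    (hB : ∀ α ∈ B, α.degree = r)
    (hU : IsStronglyStable (upperClosure (B : Set (Fin m →₀ ℕ)) : Set (Fin m →₀ ℕ)))
    {β γ : Fin m →₀ ℕ} (hβ : β ∈ upperClosure (B : Set (Fin m →₀ ℕ))) (hγβ : γ ≤ β)
    (hγ : γ.degree = r) (hγB : γ ∉ B) :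
    weight Fin.val γ < (B.filter (· ≤ β)).sup (weight Fin.val) := by
  classical
  obtain ⟨α₀, hα₀, hα₀β⟩ := hβ
  obtain ⟨α, hα, hmax⟩ := Finset.exists_max_image (B.filter (· ≤ β)) (weight Fin.val)
    ⟨α₀, Finset.mem_filter.mpr ⟨hα₀, hα₀β⟩⟩
  obtain ⟨hαB, hαβ⟩ := Finset.mem_filter.mp hα
  by_contra! hle
  -- otherwise, shifting a unit of `α` from `x_i` up to `x_j` gives a heavier generator below `β`
  obtain ⟨i, j, hij, hi, hj⟩ := exists_lt_lt_of_weight_le ((hB α hαB).trans hγ.symm)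
    (fun e => hγB (e ▸ hαB)) ((Finset.le_sup hα).trans hle)
  have hαi : α i ≠ 0 := by omega
  set α' := α - single i 1 + single j 1
  have hα'B : α' ∈ B := mem_of_mem_upperClosure_of_degree_eq hB
    (hU α (subset_upperClosure hαB) i j hij hαi)
    ((degree_sub_single_add_single hαi j).trans (hB α hαB))
  have hα'β : α' ≤ β := by
    intro k
    have := hαβ k
    have := hγβ j
    simp only [α', coe_add, coe_tsub, Pi.add_apply, Pi.sub_apply, single_apply]
    split_ifs <;> subst_vars <;> omega
  have := hmax α' (Finset.mem_filter.mpr ⟨hα'B, hα'β⟩)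
  have : weight Fin.val α' + i = weight Fin.val α + j := weight_sub_single_add_single _ hαi j
  have : (i : ℕ) < j := hij
  omega

end Finsupp

namespace MvPolynomial

variable {σ K : Type*} [Field K]

def IsGradedSubspace (P : Submodule K (MvPolynomial σ K)) : Prop :=
  ∀ f ∈ P, ∀ t, homogeneousComponent t f ∈ P

theorem isGradedSubspace_restrictSupport (A : Set (σ →₀ ℕ)) :
    IsGradedSubspace (restrictSupport K A) := by
  classical
  intro f hf t
  rw [mem_restrictSupport_iff, support_homogeneousComponent] at *
  exact fun d hd => hf (Finset.mem_filter.mp hd).1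

section

attribute [local instance] MvPolynomial.gradedAlgebra

theorem isGradedSubspace_span {F : Set (MvPolynomial σ K)} {r : ℕ}
    (hF : F ⊆ homogeneousSubmodule σ K r) :
    IsGradedSubspace ((Ideal.span F).restrictScalars K) := fun _ hf =>
  homogeneousComponent_mem_of_mem (Ideal.homogeneous_span _ F fun _ hx => ⟨r, hF hx⟩) hf

end

theorem isGradedSubspace_of_eq_span_inf {I : Ideal (MvPolynomial σ K)} {r : ℕ}
    (hI : I = Ideal.span ↑(I.restrictScalars K ⊓ homogeneousSubmodule σ K r)) :
    IsGradedSubspace (I.restrictScalars K) := by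
  rw [hI]
  exact isGradedSubspace_span fun _ hf => hf.2

theorem homogeneousSubmodule_eq_restrictSupport (t : ℕ) :
    homogeneousSubmodule σ K t = restrictSupport K {d | d.degree = t} :=
  homogeneousSubmodule_eq_finsupp_supported σ K t

theorem restrictSupport_inf_homogeneousSubmodule (A : Set (σ →₀ ℕ)) (t : ℕ) :
    restrictSupport K A ⊓ homogeneousSubmodule σ K t
      = restrictSupport K (A ∩ {d | d.degree = t}) := by
  rw [homogeneousSubmodule_eq_restrictSupport]
  ext f
  simp only [Submodule.mem_inf, mem_restrictSupport_iff, Set.subset_inter_iff]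

theorem span_inf_homogeneousSubmodule_eq_bot {F : Set (MvPolynomial σ K)} {r t : ℕ}
    (hF : F ⊆ homogeneousSubmodule σ K r) (ht : t < r) :
    (Ideal.span F).restrictScalars K ⊓ homogeneousSubmodule σ K t = ⊥ := by
  simp only [homogeneousSubmodule_eq_restrictSupport] at hF ⊢
  have hle : Ideal.span F ≤ idealOfVars σ K ^ r := Ideal.span_le.mpr fun g hg =>
    (mem_pow_idealOfVars_iff r g).mpr fun d hd => (hF hg hd).ge
  refine eq_bot_iff.mpr fun f ⟨hfF, hft⟩ => ?_
  rw [Submodule.mem_bot, ← support_eq_empty, Finset.eq_empty_iff_forall_notMem]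
  intro d hd
  have := (mem_pow_idealOfVars_iff r f).mp (hle hfF) d hd
  have : d.degree = t := hft hd
  omega

section Graded

variable {P Q : Submodule K (MvPolynomial σ K)}

theorem IsGradedSubspace.disjoint_iff (hP : IsGradedSubspace P) (hQ : IsGradedSubspace Q) :
    Disjoint P Q ↔ ∀ t,
      Disjoint (P ⊓ homogeneousSubmodule σ K t) (Q ⊓ homogeneousSubmodule σ K t) := by
  refine ⟨fun h t => h.mono inf_le_left inf_le_left, fun h => ?_⟩
  rw [Submodule.disjoint_def]
  intro f hfP hfQ
  rw [← sum_homogeneousComponent f]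
  exact Finset.sum_eq_zero fun t _ => Submodule.disjoint_def.mp (h t) _
    ⟨hP f hfP t, homogeneousComponent_mem t f⟩ ⟨hQ f hfQ t, homogeneousComponent_mem t f⟩

theorem IsGradedSubspace.inf_sup_inf_eq (hP : IsGradedSubspace P) (hQ : IsGradedSubspace Q)
    (h : P ⊔ Q = ⊤) (t : ℕ) :
    P ⊓ homogeneousSubmodule σ K t ⊔ Q ⊓ homogeneousSubmodule σ K t
      = homogeneousSubmodule σ K t := by
  refine le_antisymm (sup_le inf_le_right inf_le_right) fun f hf => ?_
  obtain ⟨a, ha, b, hb, hab⟩ := Submodule.mem_sup.mp (h ▸ Submodule.mem_top : f ∈ P ⊔ Q)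
  rw [← homogeneousComponent_eq_self hf, ← hab, map_add]
  exact Submodule.add_mem_sup ⟨hP a ha t, homogeneousComponent_mem t a⟩
    ⟨hQ b hb t, homogeneousComponent_mem t b⟩

instance [Finite σ] (t : ℕ) : FiniteDimensional K (homogeneousSubmodule σ K t) :=
  Module.Finite.iff_fg.mpr (homogeneousSubmodule_fg σ K t)

instance [Finite σ] (P : Submodule K (MvPolynomial σ K)) (t : ℕ) :
    FiniteDimensional K ↥(P ⊓ homogeneousSubmodule σ K t) :=
  Submodule.finiteDimensional_of_le inf_le_right

theorem IsGradedSubspace.finrank_inf_add_finrank_inf [Finite σ] (hP : IsGradedSubspace P)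
    (hQ : IsGradedSubspace Q) (h : IsCompl P Q) (t : ℕ) :
    Module.finrank K ↥(P ⊓ homogeneousSubmodule σ K t)
        + Module.finrank K ↥(Q ⊓ homogeneousSubmodule σ K t)
      = Module.finrank K (homogeneousSubmodule σ K t) := by
  rw [Submodule.disjoint_iff_finrank_add_eq.mp ((hP.disjoint_iff hQ).mp h.disjoint t),
    hP.inf_sup_inf_eq hQ h.sup_eq_top t]

end Graded

theorem linearIndependent_mk_monomial_iff (I : Ideal (MvPolynomial σ K)) (N : Set (σ →₀ ℕ)) :
    LinearIndependent K (fun γ : N => Ideal.Quotient.mk I (monomial (γ : σ →₀ ℕ) (1 : K))) ↔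
      Disjoint (I.restrictScalars K) (restrictSupport K N) := by
  let v : N → MvPolynomial σ K := fun γ => monomial (γ : σ →₀ ℕ) 1
  let π := (Ideal.Quotient.mkₐ K I).toLinearMap
  have hker : LinearMap.ker π = I.restrictScalars K := by
    ext
    simp [π, Ideal.Quotient.eq_zero_iff_mem]
  have hspan : Submodule.span K (Set.range v) = restrictSupport K N := by
    rw [restrictSupport_eq_span, Set.image_eq_range]
  have hv : LinearIndependent K v := by
    have := (basisMonomials σ K).linearIndependent.comp ((↑) : N → σ →₀ ℕ) Subtype.val_injective
    rwa [coe_basisMonomials] at this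
  change LinearIndependent K (π ∘ v) ↔ _
  rw [disjoint_comm, ← hspan, ← hker]
  exact ⟨Submodule.range_ker_disjoint, hv.map⟩

theorem span_mk_monomial_eq_top_iff (I : Ideal (MvPolynomial σ K)) (N : Set (σ →₀ ℕ)) :
    Submodule.span K (Set.range fun γ : N => Ideal.Quotient.mk I (monomial (γ : σ →₀ ℕ) (1 : K)))
      = ⊤ ↔ I.restrictScalars K ⊔ restrictSupport K N = ⊤ := by
  let π := (Ideal.Quotient.mkₐ K I).toLinearMap
  have hker : LinearMap.ker π = I.restrictScalars K := by
    ext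
    simp [π, Ideal.Quotient.eq_zero_iff_mem]
  have hrange : LinearMap.range π = ⊤ :=
    LinearMap.range_eq_top.mpr (Ideal.Quotient.mkₐ_surjective K I)
  change Submodule.span K (Set.range (π ∘ fun γ : N => monomial (γ : σ →₀ ℕ) (1 : K))) = ⊤ ↔ _
  rw [Set.range_comp, Submodule.span_image, LinearMap.map_eq_top_iff hrange, hker, sup_comm,
    restrictSupport_eq_span, Set.image_eq_range]

theorem restrictScalars_span_monomial (B : Set (σ →₀ ℕ)) :
    (Ideal.span ((fun α => monomial α (1 : K)) '' B)).restrictScalars K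
      = restrictSupport K (upperClosure B) := by
  ext f
  rw [Submodule.restrictScalars_mem, mem_ideal_span_monomial_image, mem_restrictSupport_iff]
  rfl

theorem monomial_mem_span_monomial_iff {B : Set (σ →₀ ℕ)} {γ : σ →₀ ℕ} :
    monomial γ (1 : K) ∈ Ideal.span ((fun α => monomial α (1 : K)) '' B)
      ↔ γ ∈ upperClosure B := by
  rw [← Submodule.restrictScalars_mem K, restrictScalars_span_monomial,
    monomial_mem_restrictSupport]
  simp

theorem isCompl_restrictSupport_compl (A : Set (σ →₀ ℕ)) :
    IsCompl (restrictSupport K A) (restrictSupport K Aᶜ) := by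
  refine ⟨Submodule.disjoint_def.mpr fun f hA hAc => ?_, codisjoint_iff.mpr ?_⟩
  · rw [← support_eq_empty, ← Finset.coe_eq_empty, ← Set.subset_empty_iff,
      ← Set.inter_compl_self A]
    exact Set.subset_inter hA hAc
  · rw [restrictSupport_eq_span, restrictSupport_eq_span, ← Submodule.span_union,
      ← Set.image_union, Set.union_compl_self, ← restrictSupport_eq_span, restrictSupport_univ]

theorem monomial_mul_mem_of_mem_restrictSupport {P : Submodule K (MvPolynomial σ K)}
    {A : Set (σ →₀ ℕ)} {f : MvPolynomial σ K} (hf : f ∈ restrictSupport K A) (δ : σ →₀ ℕ)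
    (h : ∀ γ ∈ A, monomial (δ + γ) (1 : K) ∈ P) : monomial δ 1 * f ∈ P := by
  suffices restrictSupport K A ≤ P.comap (LinearMap.mulLeft K (monomial δ 1)) from this hf
  rw [restrictSupport_eq_span, Submodule.span_le]
  rintro _ ⟨γ, hγ, rfl⟩
  simpa [monomial_mul] using h γ hγ

def markedSet (B : Finset (σ →₀ ℕ)) (T : (σ →₀ ℕ) → MvPolynomial σ K) :
    Set (MvPolynomial σ K) :=
  (fun α => monomial α 1 - T α) '' B

section MarkedSet

variable {m : ℕ} {B : Finset (Fin m →₀ ℕ)} {r : ℕ}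

local notation "𝒰" => ((upperClosure (B : Set (Fin m →₀ ℕ)) : Set (Fin m →₀ ℕ)))

local notation "𝒮" => homogeneousSubmodule (Fin m) K

theorem restrictSupport_compl_inf_homogeneousSubmodule (hB : ∀ α ∈ B, α.degree = r) :
    restrictSupport K 𝒰ᶜ ⊓ 𝒮 r
      = Submodule.span K ((fun γ => monomial γ (1 : K)) '' {γ | γ.degree = r ∧ γ ∉ B}) := by
  rw [← restrictSupport_eq_span, restrictSupport_inf_homogeneousSubmodule]
  congr 1
  ext γ
  exact ⟨fun ⟨hγ, hr⟩ => ⟨hr, fun h => hγ (subset_upperClosure h)⟩,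
    fun ⟨hr, hγ⟩ => ⟨fun h => hγ (Finsupp.mem_of_mem_upperClosure_of_degree_eq hB h hr), hr⟩⟩

theorem span_markedSet_sup_restrictSupport_eq_top (hB : ∀ α ∈ B, α.degree = r)
    (hU : Finsupp.IsStronglyStable 𝒰) {T : (Fin m →₀ ℕ) → MvPolynomial (Fin m) K}
    (hT : ∀ α ∈ B, T α ∈ restrictSupport K 𝒰ᶜ ⊓ 𝒮 r) :
    (Ideal.span (markedSet B T)).restrictScalars K ⊔ restrictSupport K 𝒰ᶜ = ⊤ := by
  rw [eq_top_iff, ← restrictSupport_univ, restrictSupport_eq_span, Submodule.span_le]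
  rintro _ ⟨β, -, rfl⟩
  simp only [SetLike.mem_coe]
  induction hk : Finsupp.weight Fin.val β - (B.filter (· ≤ β)).sup (Finsupp.weight Fin.val)
    using Nat.strong_induction_on generalizing β with
  | _ k ih =>
  by_cases hβ : β ∉ 𝒰
  · exact Submodule.mem_sup_right ((monomial_mem_restrictSupport K).mpr (.inl hβ))
  obtain ⟨α₀, hα₀, hα₀β⟩ := not_not.mp hβ
  obtain ⟨α, hα, hmax⟩ := Finset.exists_max_image (B.filter (· ≤ β)) (Finsupp.weight Fin.val)
    ⟨α₀, Finset.mem_filter.mpr ⟨hα₀, hα₀β⟩⟩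
  obtain ⟨hαB, hαβ⟩ := Finset.mem_filter.mp hα
  obtain ⟨δ, rfl⟩ := le_iff_exists_add.mp hαβ
  have hkδ : k = Finsupp.weight Fin.val δ := by
    rw [← hk, le_antisymm (Finset.sup_le hmax) (Finset.le_sup hα), map_add]
    omega
  have hTα := hT α hαB
  rw [restrictSupport_inf_homogeneousSubmodule] at hTα
  rw [show monomial (α + δ) (1 : K) = monomial δ 1 * (monomial α 1 - T α) + monomial δ 1 * T α by
    rw [mul_sub, sub_add_cancel, monomial_mul, one_mul, add_comm]]
  refine add_mem (Submodule.mem_sup_left (Ideal.mul_mem_left _ _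
    (Ideal.subset_span ⟨α, hαB, rfl⟩))) (monomial_mul_mem_of_mem_restrictSupport hTα δ ?_)
  rintro γ ⟨hγU, hγr⟩
  by_cases hδγ : δ + γ ∉ 𝒰
  · exact Submodule.mem_sup_right ((monomial_mem_restrictSupport K).mpr (.inl hδγ))
  have hlt := hU.weight_lt_sup_weight hB (not_not.mp hδγ) le_add_self hγr
    fun h => hγU (subset_upperClosure h)
  have hle := Finsupp.sup_weight_le_weight Fin.val B (δ + γ)
  refine ih _ ?_ (δ + γ) rfl
  rw [map_add] at hle ⊢
  omega

theorem exists_markedSet_of_disjoint_of_sup_eq (hB : ∀ α ∈ B, α.degree = r)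
    (hU : Finsupp.IsStronglyStable 𝒰) {I : Ideal (MvPolynomial (Fin m) K)}
    (hI : I = Ideal.span ↑(I.restrictScalars K ⊓ 𝒮 r))
    (hdisj : Disjoint (I.restrictScalars K ⊓ 𝒮 r) (restrictSupport K 𝒰ᶜ ⊓ 𝒮 r))
    (hsup : I.restrictScalars K ⊓ 𝒮 r ⊔ restrictSupport K 𝒰ᶜ ⊓ 𝒮 r = 𝒮 r) :
    ∃ T : (Fin m →₀ ℕ) → MvPolynomial (Fin m) K,
      (∀ α ∈ B, T α ∈ restrictSupport K 𝒰ᶜ ⊓ 𝒮 r) ∧ I = Ideal.span (markedSet B T) := by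
  set N := restrictSupport K 𝒰ᶜ
  set S := 𝒮 r
  have hdecomp : ∀ α ∈ B, ∃ v ∈ N ⊓ S, monomial α (1 : K) - v ∈ I := by
    intro α hα
    have hαS : monomial α (1 : K) ∈ S := isHomogeneous_monomial 1 (hB α hα)
    obtain ⟨u, hu, v, hv, huv⟩ := Submodule.mem_sup.mp (hsup ▸ hαS)
    exact ⟨v, hv, by rw [← huv, add_sub_cancel_right]; exact hu.1⟩
  choose! T hTN hTI using hdecomp
  refine ⟨T, hTN, ?_⟩
  set G := Ideal.span (markedSet B T)
  have hGS : markedSet B T ⊆ S := by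
    rintro _ ⟨α, hα, rfl⟩
    exact sub_mem (isHomogeneous_monomial 1 (hB α hα)) (hTN α hα).2
  have hGI : G ≤ I := Ideal.span_le.mpr (by rintro _ ⟨α, hα, rfl⟩; exact hTI α hα)
  have hGr : G.restrictScalars K ⊓ S ⊔ N ⊓ S = S :=
    (isGradedSubspace_span hGS).inf_sup_inf_eq (isGradedSubspace_restrictSupport _)
      (span_markedSet_sup_restrictSupport_eq_top hB hU hTN) r
  -- `G_r ≤ I_r`, `G_r + N_r = S_r` and `I_r ∩ N_r = 0` force `G_r = I_r`
  have hIr : I.restrictScalars K ⊓ S = G.restrictScalars K ⊓ S :=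
    calc I.restrictScalars K ⊓ S
        = (G.restrictScalars K ⊓ S ⊔ N ⊓ S) ⊓ (I.restrictScalars K ⊓ S) := by
          rw [hGr, inf_of_le_right inf_le_right]
      _ = G.restrictScalars K ⊓ S ⊔ N ⊓ S ⊓ (I.restrictScalars K ⊓ S) :=
          sup_inf_assoc_of_le _ (inf_le_inf_right S (Submodule.restrictScalars_mono K hGI))
      _ = G.restrictScalars K ⊓ S := by rw [inf_comm (N ⊓ S), hdisj.eq_bot, sup_bot_eq]
  refine le_antisymm ?_ hGI
  rw [hI, Ideal.span_le, hIr]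
  exact fun f hf => hf.1

theorem isCompl_of_finrank_add_eq (hB : ∀ α ∈ B, α.degree = r)
    (hU : Finsupp.IsStronglyStable 𝒰) {I : Ideal (MvPolynomial (Fin m) K)}
    (hI : I = Ideal.span ↑(I.restrictScalars K ⊓ 𝒮 r))
    {T : (Fin m →₀ ℕ) → MvPolynomial (Fin m) K} (hT : ∀ α ∈ B, T α ∈ restrictSupport K 𝒰ᶜ ⊓ 𝒮 r)
    (hIT : I = Ideal.span (markedSet B T))
    (hdim : ∀ t, r ≤ t → Module.finrank K ↥(I.restrictScalars K ⊓ 𝒮 t)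
      + Module.finrank K ↥(restrictSupport K 𝒰ᶜ ⊓ 𝒮 t) = Module.finrank K (𝒮 t)) :
    IsCompl (I.restrictScalars K) (restrictSupport K 𝒰ᶜ) := by
  have hIgr := isGradedSubspace_of_eq_span_inf hI
  have hNgr := isGradedSubspace_restrictSupport (K := K) 𝒰ᶜ
  have htop := hIT ▸ span_markedSet_sup_restrictSupport_eq_top hB hU hT
  refine ⟨(hIgr.disjoint_iff hNgr).mpr fun t => ?_, codisjoint_iff.mpr htop⟩
  rcases lt_or_ge t r with ht | ht
  · rw [hI, span_inf_homogeneousSubmodule_eq_bot (fun _ hf => hf.2) ht]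
    exact disjoint_bot_left
  · rw [Submodule.disjoint_iff_finrank_add_eq, hIgr.inf_sup_inf_eq hNgr htop]
    exact hdim t ht

end MarkedSet

end MvPolynomial

theorem stmt_12_general {K : Type*} [Field K] {n : ℕ} (r : ℕ) (p : ℕ → ℕ)
    (B : Finset (Fin (n + 1) →₀ ℕ))
    (hBdeg : ∀ α ∈ B, α.sum (fun _ e => e) = r)
    (J : Ideal (MvPolynomial (Fin (n + 1)) K))
    (hJ : J = Ideal.span ((fun a : Fin (n + 1) →₀ ℕ => (monomial a (1 : K) :
      MvPolynomial (Fin (n + 1)) K)) '' ↑B))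
    (hSS : ∀ β : Fin (n + 1) →₀ ℕ, monomial β (1 : K) ∈ J →
      ∀ i j : Fin (n + 1), i < j → β i ≠ 0 →
        monomial (β - Finsupp.single i 1 + Finsupp.single j 1) (1 : K) ∈ J)
    (hJp : ∀ t : ℕ, r ≤ t →
      Module.finrank K
        ↥(Submodule.restrictScalars K J ⊓ homogeneousSubmodule (Fin (n + 1)) K t) + p t
      = Module.finrank K ↥(homogeneousSubmodule (Fin (n + 1)) K t))
    (I : Ideal (MvPolynomial (Fin (n + 1)) K))
    (hI : I = Ideal.span
      ((Submodule.restrictScalars K I ⊓ homogeneousSubmodule (Fin (n + 1)) K r :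
        Submodule K (MvPolynomial (Fin (n + 1)) K)) : Set (MvPolynomial (Fin (n + 1)) K))) :
    (Disjoint
        (Submodule.restrictScalars K I ⊓ homogeneousSubmodule (Fin (n + 1)) K r)
        (Submodule.span K ((fun γ : Fin (n + 1) →₀ ℕ => (monomial γ (1 : K) :
          MvPolynomial (Fin (n + 1)) K)) '' {γ | γ.sum (fun _ e => e) = r ∧ γ ∉ B})) ∧
      (Submodule.restrictScalars K I ⊓ homogeneousSubmodule (Fin (n + 1)) K r)
        ⊔ Submodule.span K ((fun γ : Fin (n + 1) →₀ ℕ => (monomial γ (1 : K) :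
          MvPolynomial (Fin (n + 1)) K)) '' {γ | γ.sum (fun _ e => e) = r ∧ γ ∉ B})
        = homogeneousSubmodule (Fin (n + 1)) K r ∧
      (∀ t : ℕ, r ≤ t →
        Module.finrank K
          ↥(Submodule.restrictScalars K I ⊓ homogeneousSubmodule (Fin (n + 1)) K t) + p t
        = Module.finrank K ↥(homogeneousSubmodule (Fin (n + 1)) K t)))
    ↔ (∃ T : (Fin (n + 1) →₀ ℕ) → MvPolynomial (Fin (n + 1)) K,
        (∀ α ∈ B, T α ∈ homogeneousSubmodule (Fin (n + 1)) K r ∧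
          ∀ γ ∈ (T α).support, monomial γ (1 : K) ∉ J) ∧
        I = Ideal.span ((fun α : Fin (n + 1) →₀ ℕ =>
          (monomial α (1 : K) : MvPolynomial (Fin (n + 1)) K) - T α) '' ↑B) ∧
        LinearIndependent K
          (fun γ : {γ : Fin (n + 1) →₀ ℕ // monomial γ (1 : K) ∉ J} =>
            Ideal.Quotient.mk I (monomial (γ : Fin (n + 1) →₀ ℕ) (1 : K))) ∧
        Submodule.span K (Set.range
          (fun γ : {γ : Fin (n + 1) →₀ ℕ // monomial γ (1 : K) ∉ J} =>
            Ideal.Quotient.mk I (monomial (γ : Fin (n + 1) →₀ ℕ) (1 : K)))) = ⊤) := by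
  set U : Set (Fin (n + 1) →₀ ℕ) := ↑(upperClosure (B : Set (Fin (n + 1) →₀ ℕ)))
  have hJU : ∀ γ, monomial γ (1 : K) ∈ J ↔ γ ∈ U := fun γ => hJ ▸ monomial_mem_span_monomial_iff
  have hU : Finsupp.IsStronglyStable U := fun β hβ i j hij hi =>
    (hJU _).mp (hSS β ((hJU β).mpr hβ) i j hij hi)
  have hIgr := isGradedSubspace_of_eq_span_inf hI
  have hNgr := isGradedSubspace_restrictSupport (K := K) Uᶜ
  have hNdim : ∀ t, r ≤ t →
      Module.finrank K ↥(restrictSupport K Uᶜ ⊓ homogeneousSubmodule (Fin (n + 1)) K t) = p t := by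
    intro t ht
    have hJt := hJp t ht
    rw [hJ, restrictScalars_span_monomial] at hJt
    exact Nat.add_left_cancel (((isGradedSubspace_restrictSupport U).finrank_inf_add_finrank_inf
      hNgr (isCompl_restrictSupport_compl U) t).trans hJt.symm)
  have hNJ : restrictSupport K {γ | monomial γ (1 : K) ∉ J} = restrictSupport K Uᶜ :=
    congrArg _ (Set.ext fun γ => (hJU γ).not)
  have hli := linearIndependent_mk_monomial_iff I {γ | monomial γ (1 : K) ∉ J}
  have hspan := span_mk_monomial_eq_top_iff I {γ | monomial γ (1 : K) ∉ J}
  rw [hNJ] at hli hspan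
  simp only [show ∀ γ : Fin (n + 1) →₀ ℕ, γ.sum (fun _ e => e) = γ.degree from fun _ => rfl,
    ← restrictSupport_compl_inf_homogeneousSubmodule hBdeg]
  constructor
  · rintro ⟨hdisj, hsup, hdim⟩
    obtain ⟨T, hT, hIT⟩ := exists_markedSet_of_disjoint_of_sup_eq hBdeg hU hI hdisj hsup
    have hc := isCompl_of_finrank_add_eq hBdeg hU hI hT hIT fun t ht => hNdim t ht ▸ hdim t ht
    exact ⟨T, fun α hα => ⟨(hT α hα).2, fun γ hγ => (hJU γ).not.mpr ((hT α hα).1 hγ)⟩, hIT,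
      hli.mpr hc.disjoint, hspan.mpr hc.sup_eq_top⟩
  · rintro ⟨-, -, -, hl, hs⟩
    have hc : IsCompl _ _ := ⟨hli.mp hl, codisjoint_iff.mpr (hspan.mp hs)⟩
    refine ⟨(hIgr.disjoint_iff hNgr).mp hc.disjoint r, hIgr.inf_sup_inf_eq hNgr hc.sup_eq_top r,
      fun t ht => hNdim t ht ▸ hIgr.finrank_inf_add_finrank_inf hNgr hc t⟩

/-- **Corollary 2.6**: let `J` be a strongly stable ideal generated by `s` monomials of
degree `r` with `dim_K (S/J)_t = p t` for all `t ≥ r`, and let `I` be a homogeneous ideal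
generated by its degree-`r` component. Then `I_r` is a complement of `⟨N(J)_r⟩` in `S_r`
with `dim_K (S/I)_t = p t` for all `t ≥ r` (i.e. `I ∈ H_J`) if and only if `I` is generated
by a `J`-marked basis: a marked set `{x^α − T α : x^α ∈ B}` with `T α` homogeneous of degree
`r` supported on `N(J)`, such that the classes of the monomials of `N(J)` form a `K`-basis
of `S/I`.  (Quotient dimensions are encoded as `dim I_t + p t = dim S_t`.) -/
theorem stmt_12 {K : Type*} [Field K] {n : ℕ} (r s : ℕ) (p : ℕ → ℕ)
    (B : Finset (Fin (n + 1) →₀ ℕ)) (hBcard : B.card = s)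
    (hBdeg : ∀ α ∈ B, α.sum (fun _ e => e) = r)
    (J : Ideal (MvPolynomial (Fin (n + 1)) K))
    (hJ : J = Ideal.span ((fun a : Fin (n + 1) →₀ ℕ => (monomial a (1 : K) :
      MvPolynomial (Fin (n + 1)) K)) '' ↑B))
    (hSS : ∀ β : Fin (n + 1) →₀ ℕ, monomial β (1 : K) ∈ J →
      ∀ i j : Fin (n + 1), i < j → β i ≠ 0 →
        monomial (β - Finsupp.single i 1 + Finsupp.single j 1) (1 : K) ∈ J)
    (hJp : ∀ t : ℕ, r ≤ t →
      Module.finrank K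
        ↥(Submodule.restrictScalars K J ⊓ homogeneousSubmodule (Fin (n + 1)) K t) + p t
      = Module.finrank K ↥(homogeneousSubmodule (Fin (n + 1)) K t))
    (I : Ideal (MvPolynomial (Fin (n + 1)) K))
    (hI : I = Ideal.span
      ((Submodule.restrictScalars K I ⊓ homogeneousSubmodule (Fin (n + 1)) K r :
        Submodule K (MvPolynomial (Fin (n + 1)) K)) : Set (MvPolynomial (Fin (n + 1)) K))) :
    (Disjoint
        (Submodule.restrictScalars K I ⊓ homogeneousSubmodule (Fin (n + 1)) K r)
        (Submodule.span K ((fun γ : Fin (n + 1) →₀ ℕ => (monomial γ (1 : K) :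
          MvPolynomial (Fin (n + 1)) K)) '' {γ | γ.sum (fun _ e => e) = r ∧ γ ∉ B})) ∧
      (Submodule.restrictScalars K I ⊓ homogeneousSubmodule (Fin (n + 1)) K r)
        ⊔ Submodule.span K ((fun γ : Fin (n + 1) →₀ ℕ => (monomial γ (1 : K) :
          MvPolynomial (Fin (n + 1)) K)) '' {γ | γ.sum (fun _ e => e) = r ∧ γ ∉ B})
        = homogeneousSubmodule (Fin (n + 1)) K r ∧
      (∀ t : ℕ, r ≤ t →
        Module.finrank K
          ↥(Submodule.restrictScalars K I ⊓ homogeneousSubmodule (Fin (n + 1)) K t) + p t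
        = Module.finrank K ↥(homogeneousSubmodule (Fin (n + 1)) K t)))
    ↔ (∃ T : (Fin (n + 1) →₀ ℕ) → MvPolynomial (Fin (n + 1)) K,
        (∀ α ∈ B, T α ∈ homogeneousSubmodule (Fin (n + 1)) K r ∧
          ∀ γ ∈ (T α).support, monomial γ (1 : K) ∉ J) ∧
        I = Ideal.span ((fun α : Fin (n + 1) →₀ ℕ =>
          (monomial α (1 : K) : MvPolynomial (Fin (n + 1)) K) - T α) '' ↑B) ∧
        LinearIndependent K
          (fun γ : {γ : Fin (n + 1) →₀ ℕ // monomial γ (1 : K) ∉ J} =>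
            Ideal.Quotient.mk I (monomial (γ : Fin (n + 1) →₀ ℕ) (1 : K))) ∧
        Submodule.span K (Set.range
          (fun γ : {γ : Fin (n + 1) →₀ ℕ // monomial γ (1 : K) ∉ J} =>
            Ideal.Quotient.mk I (monomial (γ : Fin (n + 1) →₀ ℕ) (1 : K)))) = ⊤) :=
  stmt_12_general r p B hBdeg J hJ hSS hJp I hI
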